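/- (Weyl's theorem / Schur–Weyl duality, commutant form, other direction.) For every N ≥ 1, a ℂ-linear endomorphism T of (ℂ²)^{⊗N} commutes with g^{⊗N} for all g ∈ GL₂(ℂ) if and only if T lies in the ℂ-linear span of the permutation operators {P_π : π ∈ S_N}. -/

import Mathlib

noncomputable section

/-- `(ℂ²)^{⊗N}` realized as functions `(Fin N → Fin 2) → ℂ`; operators on it are matrices
indexed by `Fin N → Fin 2`. -/
abbrev TensorOps (N : ℕ) := Matrix (Fin N → Fin 2) (Fin N → Fin 2) ℂ

/-- The `N`-fold Kronecker power `g^{⊗N}` of a `2 × 2` matrix `g`, acting on `(ℂ²)^{⊗N}`. -/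
def kron (N : ℕ) (g : Matrix (Fin 2) (Fin 2) ℂ) : TensorOps N :=
  Matrix.of fun t s => ∏ j : Fin N, g (t j) (s j)

/-- The permutation operator `P_π` on `(ℂ²)^{⊗N}`, permuting the tensor factors:
`P_π (v_1 ⊗ ⋯ ⊗ v_N) = v_{π⁻¹(1)} ⊗ ⋯ ⊗ v_{π⁻¹(N)}`. -/
def permOp (N : ℕ) (π : Equiv.Perm (Fin N)) : TensorOps N :=
  Matrix.of fun t s => if s = t ∘ π then 1 else 0

/-!
An operator commuting with `g^{⊗N}` for all invertible `g` commutes with all `g^{⊗N}`, since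
invertible matrices are dense and `g ↦ g^{⊗N}` is continuous. The commutant of the permutation
operators consists of the permutation-invariant matrices, and these are spanned by the Kronecker
powers: by Ryser's inclusion–exclusion formula, a symmetrised elementary tensor
`∑_σ g_{σ 1} ⊗ ⋯ ⊗ g_{σ N}` is the alternating sum of the powers `(∑_{i ∈ s} g_i)^{⊗N}`.
So `T` lies in the double commutant of the permutation representation of `S_N`, which is the span
of the `P_π` by Maschke's theorem and the Jacobson density theorem.
-/

open Finset Module

theorem Finset.sum_superset_neg_one_pow_card_compl {α R : Type*} [Fintype α] [DecidableEq α]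
    [Ring R] (s : Finset α) :
    ∑ t with s ⊆ t, (-1 : R) ^ #tᶜ = if s = univ then 1 else 0 := by
  have h := congr(($(sum_powerset_neg_one_pow_card (x := sᶜ)) : R))
  push_cast at h
  simp only [compl_eq_empty_iff] at h
  rw [← h]
  refine sum_nbij' compl compl (fun t ht ↦ ?_) (fun t ht ↦ ?_) (fun t _ ↦ compl_compl t)
    (fun t _ ↦ compl_compl t) (fun t _ ↦ rfl)
  · simpa using (mem_filter.1 ht).2
  · simpa [subset_compl_comm] using ht

/-- Ryser's formula for the permanent. -/
theorem Finset.sum_neg_one_pow_card_compl_mul_prod_sum {ι R : Type*} [Fintype ι] [DecidableEq ι]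
    [CommRing R] (a : ι → ι → R) :
    ∑ s : Finset ι, (-1) ^ #sᶜ * ∏ j, ∑ i ∈ s, a i j = ∑ σ : Equiv.Perm ι, ∏ j, a (σ j) j := by
  calc ∑ s : Finset ι, (-1) ^ #sᶜ * ∏ j, ∑ i ∈ s, a i j
      = ∑ s : Finset ι, ∑ f : ι → ι,
          (if univ.image f ⊆ s then (-1) ^ #sᶜ else 0) * ∏ j, a (f j) j := by
        refine sum_congr rfl fun s _ ↦ ?_
        have : Fintype.piFinset (fun _ ↦ s) = univ.filter (fun f : ι → ι ↦ univ.image f ⊆ s) := by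
          ext f; simp [image_subset_iff]
        simp_rw [prod_univ_sum, mul_sum, this, sum_filter, ite_mul, zero_mul]
    _ = ∑ f : ι → ι, (if univ.image f = univ then 1 else 0) * ∏ j, a (f j) j := by
        rw [sum_comm]
        refine sum_congr rfl fun f _ ↦ ?_
        rw [← sum_mul, ← sum_superset_neg_one_pow_card_compl, sum_filter]
    _ = ∑ σ : Equiv.Perm ι, ∏ j, a (σ j) j := by
        simp_rw [ite_mul, one_mul, zero_mul]
        rw [← sum_filter]
        symm
        refine sum_nbij (fun σ ↦ ⇑σ) (fun σ _ ↦ by simp) Equiv.coe_fn_injective.injOn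
          (fun f hf ↦ ?_) fun _ _ ↦ rfl
        have hf : ∀ i, ∃ j, f j = i := by
          simpa [eq_univ_iff_forall] using (mem_filter.1 hf).2
        exact ⟨Equiv.ofBijective f ⟨Finite.injective_iff_surjective.2 hf, hf⟩, mem_univ _, rfl⟩

theorem Matrix.dense_setOf_isUnit {n 𝕜 : Type*} [Fintype n] [DecidableEq n]
    [NontriviallyNormedField 𝕜] [CompleteSpace 𝕜] : Dense {A : Matrix n n 𝕜 | IsUnit A} := by
  intro A
  -- `A - ε` is invertible off the finite spectrum of `A` and tends to `A` as `ε → 0`.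
  have hc : Continuous fun ε : 𝕜 ↦ A - algebraMap 𝕜 _ ε := by fun_prop
  have h0 := ((Matrix.finite_spectrum A).countable.dense_compl 𝕜).closure_eq ▸ Set.mem_univ 0
  simpa using map_mem_closure hc h0 fun ε hε ↦ by simpa using (spectrum.notMem_iff.1 hε).neg

namespace Representation

variable {k G V : Type*} [Field k] [Group G] [AddCommGroup V] [Module k V]
  (ρ : Representation k G V)

theorem asAlgebraHom_mem_span_range (r : MonoidAlgebra k G) :
    asAlgebraHom ρ r ∈ Submodule.span k (Set.range ρ) := by
  rw [asAlgebraHom_def, MonoidAlgebra.lift_apply]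
  exact Submodule.finsuppSum_mem _ _ _ _ fun g _ ↦
    Submodule.smul_mem _ _ (Submodule.subset_span ⟨g, rfl⟩)

variable [Finite G] [NeZero (Nat.card G : k)] [FiniteDimensional k V]

theorem mem_span_range_of_forall_commute (f : End k V)
    (hf : ∀ φ : End k V, (∀ g, Commute φ (ρ g)) → Commute f φ) :
    f ∈ Submodule.span k (Set.range ρ) := by
  let F : End (End (MonoidAlgebra k G) ρ.asModule) ρ.asModule :=
    { toFun := fun m ↦ ρ.asModuleEquiv.symm (f (ρ.asModuleEquiv m))
      map_add' := by simp
      map_smul' := fun φ m ↦ by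
        have hφ : ∀ g, Commute (ρ.asModuleEquiv.toLinearMap ∘ₗ φ.restrictScalars k ∘ₗ
            ρ.asModuleEquiv.symm.toLinearMap) (ρ g) := fun g ↦ by
          ext v
          simp only [Module.End.mul_apply, LinearMap.coe_comp, Function.comp_apply,
            LinearEquiv.coe_coe, LinearMap.coe_restrictScalars, asModuleEquiv_symm_map_rho,
            φ.map_smul, asModuleEquiv_map_smul, asAlgebraHom_of]
        simpa using congr(ρ.asModuleEquiv.symm ($((hf _ hφ).eq) (ρ.asModuleEquiv m))) }
  -- `ρ.asModule` is a semisimple `k[G]`-module by Maschke's theorem, so Jacobson density applies.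
  have := Module.Finite.of_restrictScalars_finite k (End (MonoidAlgebra k G) ρ.asModule) ρ.asModule
  obtain ⟨r, hr⟩ := Module.Finite.toModuleEnd_moduleEnd_surjective F
  convert asAlgebraHom_mem_span_range ρ r
  ext v
  have := congr(ρ.asModuleEquiv ($hr (ρ.asModuleEquiv.symm v)))
  simpa [F, asModuleEquiv_map_smul] using this.symm

end Representation

variable {N : ℕ}

theorem permOp_mul_apply (π : Equiv.Perm (Fin N)) (X : TensorOps N) (t s : Fin N → Fin 2) :
    (permOp N π * X) t s = X (t ∘ π) s := by
  simp [permOp, Matrix.mul_apply]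

theorem mul_permOp_apply (π : Equiv.Perm (Fin N)) (X : TensorOps N) (t s : Fin N → Fin 2) :
    (X * permOp N π) t s = X t (s ∘ π.symm) := by
  rw [Matrix.mul_apply, Fintype.sum_eq_single (s ∘ π.symm)]
  · simp [permOp, Function.comp_assoc]
  · intro u hu
    simp only [permOp, Matrix.of_apply, mul_ite, mul_one, mul_zero, ite_eq_right_iff]
    rintro rfl
    exact absurd (by ext; simp) hu

theorem permOp_mul_permOp (π σ : Equiv.Perm (Fin N)) :
    permOp N π * permOp N σ = permOp N (π * σ) := by
  ext t s
  rw [permOp_mul_apply]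
  rfl

theorem permOp_one : permOp N 1 = 1 := by
  ext t s
  simp [permOp, Matrix.one_apply, eq_comm]

def permRep (N : ℕ) : Representation ℂ (Equiv.Perm (Fin N)) ((Fin N → Fin 2) → ℂ) where
  toFun π := Matrix.toLin' (permOp N π)
  map_one' := by rw [permOp_one, Matrix.toLin'_one]; rfl
  map_mul' π σ := by rw [← permOp_mul_permOp, Matrix.toLin'_mul]; rfl

theorem commute_permOp_kron (π : Equiv.Perm (Fin N)) (g : Matrix (Fin 2) (Fin 2) ℂ) :
    Commute (permOp N π) (kron N g) := by
  ext t s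
  rw [permOp_mul_apply, mul_permOp_apply]
  simp only [kron, Matrix.of_apply, Function.comp_apply]
  rw [← Equiv.prod_comp π fun j ↦ g (t j) (s (π.symm j))]
  simp

theorem continuous_kron : Continuous (kron N) := by
  unfold kron; fun_prop

def kronProd (g : Fin N → Matrix (Fin 2) (Fin 2) ℂ) : TensorOps N :=
  Matrix.of fun t s => ∏ j, g j (t j) (s j)

theorem single_one_eq_kronProd (t s : Fin N → Fin 2) :
    Matrix.single t s (1 : ℂ) = kronProd fun j ↦ Matrix.single (t j) (s j) 1 := by
  ext a b
  simp [kronProd, Matrix.single_apply, prod_ite_zero, funext_iff, forall_and]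

theorem sum_perm_kronProd_comp_mem_span_kron (g : Fin N → Matrix (Fin 2) (Fin 2) ℂ) :
    ∑ σ : Equiv.Perm (Fin N), kronProd (g ∘ σ) ∈ Submodule.span ℂ (Set.range (kron N)) := by
  have ryser : ∑ σ : Equiv.Perm (Fin N), kronProd (g ∘ σ)
      = ∑ s : Finset (Fin N), (-1 : ℂ) ^ #sᶜ • kron N (∑ i ∈ s, g i) := by
    ext a b
    simp only [Matrix.sum_apply, Matrix.smul_apply, kronProd, kron, Matrix.of_apply, smul_eq_mul,
      Function.comp_apply]
    exact (sum_neg_one_pow_card_compl_mul_prod_sum fun i j ↦ g i (a j) (b j)).symm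
  rw [ryser]
  exact Submodule.sum_mem _ fun s _ ↦ Submodule.smul_mem _ _ (Submodule.subset_span ⟨_, rfl⟩)

theorem mem_span_kron_of_forall_commute_permOp (X : TensorOps N)
    (hX : ∀ π, Commute X (permOp N π)) : X ∈ Submodule.span ℂ (Set.range (kron N)) := by
  have hsym (π : Equiv.Perm (Fin N)) (t s : Fin N → Fin 2) : X (t ∘ π) (s ∘ π) = X t s := by
    simpa [permOp_mul_apply, mul_permOp_apply, Function.comp_assoc] using
      congr($((hX π).eq) t (s ∘ π)).symm
  have hexpand (π : Equiv.Perm (Fin N)) :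
      X = ∑ t, ∑ s, X t s • Matrix.single (t ∘ π) (s ∘ π) (1 : ℂ) := by
    let e : (Fin N → Fin 2) ≃ (Fin N → Fin 2) :=
      ⟨(· ∘ π), (· ∘ π.symm), fun t ↦ by ext; simp, fun t ↦ by ext; simp⟩
    conv_lhs => rw [Matrix.matrix_eq_sum_single X, ← e.sum_comp]
    refine sum_congr rfl fun t _ ↦ ?_
    rw [← e.sum_comp]
    refine sum_congr rfl fun s _ ↦ ?_
    simp [e, hsym, Matrix.smul_single]
  have hfact : (N.factorial : ℂ) • X
      = ∑ t, ∑ s, X t s • ∑ π : Equiv.Perm (Fin N), Matrix.single (t ∘ π) (s ∘ π) (1 : ℂ) := by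
    calc (N.factorial : ℂ) • X = ∑ _π : Equiv.Perm (Fin N), X := by
          rw [sum_const, card_univ, Fintype.card_perm, Fintype.card_fin, Nat.cast_smul_eq_nsmul]
      _ = _ := by
          rw [sum_congr rfl fun π _ ↦ hexpand π, sum_comm]
          simp_rw [smul_sum]
          exact sum_congr rfl fun t _ ↦ sum_comm
  have hmem : (N.factorial : ℂ) • X ∈ Submodule.span ℂ (Set.range (kron N)) := by
    rw [hfact]
    refine Submodule.sum_mem _ fun t _ ↦ Submodule.sum_mem _ fun s _ ↦ Submodule.smul_mem _ _ ?_
    rw [sum_congr rfl fun (π : Equiv.Perm (Fin N)) _ ↦ single_one_eq_kronProd (t ∘ π) (s ∘ π)]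
    exact sum_perm_kronProd_comp_mem_span_kron fun j ↦ Matrix.single (t j) (s j) 1
  exact (Submodule.smul_mem_iff _ (Nat.cast_ne_zero.2 N.factorial_ne_zero)).1 hmem

theorem commute_kron_of_forall_isUnit {T : TensorOps N}
    (h : ∀ g, IsUnit g → Commute T (kron N g)) (g : Matrix (Fin 2) (Fin 2) ℂ) :
    Commute T (kron N g) :=
  congr_fun (Continuous.ext_on Matrix.dense_setOf_isUnit (continuous_const.mul continuous_kron)
    (continuous_kron.mul continuous_const) fun g hg ↦ (h g hg).eq) g

theorem mem_span_permOp_of_forall_commute {T : TensorOps N}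
    (hT : ∀ X : TensorOps N, (∀ π, Commute X (permOp N π)) → Commute T X) :
    T ∈ Submodule.span ℂ (Set.range (permOp N)) := by
  let e : TensorOps N ≃ₐ[ℂ] End ℂ ((Fin N → Fin 2) → ℂ) := Matrix.toLinAlgEquiv'
  have hρ : ∀ π, permRep N π = e (permOp N π) := fun _ ↦ rfl
  have h := (permRep N).mem_span_range_of_forall_commute (e T) fun φ hφ ↦ by
    simpa using (hT (e.symm φ) fun π ↦ by simpa [hρ] using (hφ π).map e.symm).map e
  rw [show Set.range (permRep N) = e.toLinearMap '' Set.range (permOp N) by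
    rw [← Set.range_comp]; rfl, Submodule.span_image] at h
  obtain ⟨X, hX, hXT⟩ := Submodule.mem_map.1 h
  exact e.injective hXT ▸ hX

theorem schurWeyl_commutant_of_GL_general (N : ℕ) (T : TensorOps N) :
    (∀ g : Matrix (Fin 2) (Fin 2) ℂ, IsUnit g → T * kron N g = kron N g * T) ↔
      T ∈ Submodule.span ℂ (Set.range (permOp N)) := by
  constructor
  · intro h
    have hT := commute_kron_of_forall_isUnit h
    refine mem_span_permOp_of_forall_commute fun X hX ↦ ?_
    exact Commute.span_right (by simpa using hT) X (mem_span_kron_of_forall_commute_permOp X hX)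
  · intro hT g _
    exact Commute.span_left (by simpa using (commute_permOp_kron · g)) T hT

/-- Schur–Weyl duality (commutant form, other direction): an endomorphism of `(ℂ²)^{⊗N}`
commutes with `g^{⊗N}` for every `g ∈ GL₂(ℂ)` iff it lies in the ℂ-linear span of the
permutation operators `{P_π : π ∈ S_N}`. -/
theorem schurWeyl_commutant_of_GL (N : ℕ) (hN : 1 ≤ N) (T : TensorOps N) :
    (∀ g : Matrix (Fin 2) (Fin 2) ℂ, IsUnit g → T * kron N g = kron N g * T) ↔
      T ∈ Submodule.span ℂ (Set.range (permOp N)) :=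
  schurWeyl_commutant_of_GL_general N T
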